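/- Let Ξ be a finite set and (p_{ij})_{i,j∈Ξ} a row-stochastic matrix (p_{ij} ≥ 0, Σ_j p_{ij} = 1) admitting a strictly positive stationary distribution (p_i) (Σ_i p_i p_{ij} = p_j), and suppose there exists N ≥ 1 such that all entries of the N-th matrix power of (p_{ij}) are strictly positive. Let G be a group acting on a probability space (X,μ) by invertible measure-preserving transformations with Koopman operators T_g, let γ : Ξ → G, and define P on L²(Ξ × X, p × μ) by (Pφ)_i = Σ_j p_{ij} T_{γ(i)}^{−1} φ_j. Then for every k ≥ 1, a function φ ∈ L²(Ξ × X, p × μ) satisfies P^k φ = φ if and only if for every sequence i₀, i₁, …, i_k in Ξ with p_{i_s i_{s+1}} > 0 for all 0 ≤ s ≤ k−1 one has φ_{i₀} = T_{γ(i₀)}^{−1} T_{γ(i₁)}^{−1} ⋯ T_{γ(i_{k−1})}^{−1} φ_{i_k}. -/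

import Mathlib

/-!
Write `E(φ) = ⟨φ, φ⟩`. Since the `T_g` are isometries and `(p_i)` is stationary,
`2 E(Pφ) + D(φ) = 2 E(φ)` with the dispersion `D(φ) = Σ_a p_a Σ_{j,l} p_{aj} p_{al} ‖φ_j - φ_l‖²`.
The energy is thus nonincreasing along orbits; if `P^k φ = φ` it is constant on the first `k`
steps, so `D(P^s φ) = 0` for `s < k`: each `P^s φ` is constant on the successors of every state,
i.e. `(P^{s+1} φ)_a = T_{γ(a)}⁻¹ (P^s φ)_b` along every edge `a → b`, and chaining these edges
gives the path relation.

Conversely, a path relation of length `t + 1` between `φ` and `ψ` factors through the function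
`χ` read off along any path of length `t`; it is well defined because two such paths from `x`
can both be preceded by an edge into `x` (stationarity) and the `T_g` are injective. Then
`Pχ = φ`, and induction on `t` gives `P^t ψ = φ`.
-/

open MeasureTheory Filter

noncomputable section

/-- The Markov operator `(Pφ)_i = Σ_j p_{ij} T_{γ(i)}⁻¹ φ_j` on tuples `(φ_j)_{j∈Ξ}` of
`L²(X,μ)`-functions (identified with functions on `Ξ × X`). -/
def Pop {Ξ : Type*} [Fintype Ξ] {X : Type*} [MeasurableSpace X] {G : Type*} [Group G]
    (μ : Measure X) (p' : Ξ → Ξ → ℝ) (T : G → Lp ℝ 2 μ →L[ℝ] Lp ℝ 2 μ) (γ : Ξ → G)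
    (φ : Ξ → Lp ℝ 2 μ) : Ξ → Lp ℝ 2 μ :=
  fun i => ∑ j, p' i j • T (γ i)⁻¹ (φ j)

/-- The operator `(Uφ)_j = T_{ω(j)}⁻¹ φ_{ι(j)}`. -/
def Uop {Ξ : Type*} {X : Type*} [MeasurableSpace X] {G : Type*} [Group G]
    (μ : Measure X) (T : G → Lp ℝ 2 μ →L[ℝ] Lp ℝ 2 μ) (ι : Ξ → Ξ) (ω : Ξ → G)
    (φ : Ξ → Lp ℝ 2 μ) : Ξ → Lp ℝ 2 μ :=
  fun j => T (ω j)⁻¹ (φ (ι j))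

/-- The inner product `⟨φ,ψ⟩ = Σ_j p_j ⟨φ_j, ψ_j⟩_{L²(X,μ)}` of `L²(Ξ × X, p × μ)`. -/
def wip {Ξ : Type*} [Fintype Ξ] {X : Type*} [MeasurableSpace X]
    (μ : Measure X) (p : Ξ → ℝ) (φ ψ : Ξ → Lp ℝ 2 μ) : ℝ :=
  ∑ j, p j * (inner ℝ (φ j) (ψ j) : ℝ)

/-- `chainApply T [g₁,…,gₖ] ψ = T_{g₁}⁻¹ (T_{g₂}⁻¹ (⋯ (T_{gₖ}⁻¹ ψ)))`. -/
def chainApply {X : Type*} [MeasurableSpace X] {G : Type*} [Group G]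
    (μ : Measure X) (T : G → Lp ℝ 2 μ →L[ℝ] Lp ℝ 2 μ)
    (gs : List G) (ψ : Lp ℝ 2 μ) : Lp ℝ 2 μ :=
  gs.foldr (fun g acc => T g⁻¹ acc) ψ


lemma norm_sum_smul_sq {E : Type*} [NormedAddCommGroup E] [InnerProductSpace ℝ E]
    {J : Type*} [Fintype J] (w : J → ℝ) (v : J → E) :
    2 * ‖∑ j, w j • v j‖ ^ 2 + ∑ j, ∑ l, w j * w l * ‖v j - v l‖ ^ 2
      = 2 * (∑ j, w j) * ∑ j, w j * ‖v j‖ ^ 2 := by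
  have hsq : ‖∑ j, w j • v j‖ ^ 2 = ∑ j, ∑ l, w j * w l * inner ℝ (v j) (v l) := by
    simp_rw [← real_inner_self_eq_norm_sq, sum_inner, inner_sum, real_inner_smul_left,
      real_inner_smul_right, mul_assoc]
  have hswap : ∑ j, ∑ l, w j * w l * ‖v j‖ ^ 2 = ∑ j, ∑ l, w j * w l * ‖v l‖ ^ 2 := by
    rw [Finset.sum_comm]
    exact Finset.sum_congr rfl fun _ _ => Finset.sum_congr rfl fun _ _ => by ring
  calc 2 * ‖∑ j, w j • v j‖ ^ 2 + ∑ j, ∑ l, w j * w l * ‖v j - v l‖ ^ 2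
      = ∑ j, ∑ l, w j * w l * ‖v j‖ ^ 2 + ∑ j, ∑ l, w j * w l * ‖v l‖ ^ 2 := by
        simp_rw [hsq, Finset.mul_sum, ← Finset.sum_add_distrib, norm_sub_sq_real]
        exact Finset.sum_congr rfl fun _ _ => Finset.sum_congr rfl fun _ _ => by ring
    _ = 2 * (∑ j, w j) * ∑ j, w j * ‖v j‖ ^ 2 := by
        rw [hswap, ← two_mul, mul_assoc, Finset.sum_mul_sum]
        simp_rw [mul_assoc]

lemma Lp.norm_eq_of_ae_eq_comp {X Y E : Type*} [MeasurableSpace X] [MeasurableSpace Y]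
    [NormedAddCommGroup E] {q : ENNReal} {μ : Measure X} {ν : Measure Y} {S : X → Y}
    (hS : MeasurePreserving S μ ν) {f : Lp E q ν} {g : Lp E q μ} (h : g =ᵐ[μ] f ∘ S) :
    ‖g‖ = ‖f‖ := by
  rw [← Lp.norm_compMeasurePreserving f hS]
  exact congrArg _ (Lp.ext (h.trans (Lp.coeFn_compMeasurePreserving f hS).symm))

def PathRelated {Ξ : Type*} {X : Type*} [MeasurableSpace X] {G : Type*} [Group G]
    (μ : Measure X) (p' : Ξ → Ξ → ℝ) (T : G → Lp ℝ 2 μ →L[ℝ] Lp ℝ 2 μ) (γ : Ξ → G)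
    (t : ℕ) (φ ψ : Ξ → Lp ℝ 2 μ) : Prop :=
  ∀ i : ℕ → Ξ, (∀ s, s < t → 0 < p' (i s) (i (s + 1))) →
    φ (i 0) = chainApply μ T ((List.range t).map fun s => γ (i s)) (ψ (i t))

section Paths

variable {Ξ : Type*} {X : Type*} [MeasurableSpace X] {G : Type*} [Group G]
  {μ : Measure X} {p' : Ξ → Ξ → ℝ} {T : G → Lp ℝ 2 μ →L[ℝ] Lp ℝ 2 μ} {γ : Ξ → G}

lemma chainApply_range_succ (t : ℕ) (i : ℕ → Ξ) (ψ : Lp ℝ 2 μ) :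
    chainApply μ T ((List.range (t + 1)).map fun s => γ (i s)) ψ
      = T (γ (i 0))⁻¹ (chainApply μ T ((List.range t).map fun s => γ (i (s + 1))) ψ) := by
  rw [List.range_succ_eq_map, List.map_cons, List.map_map]
  rfl

lemma PathRelated.succ {t : ℕ} {φ χ ψ : Ξ → Lp ℝ 2 μ}
    (hφχ : ∀ a b, 0 < p' a b → φ a = T (γ a)⁻¹ (χ b)) (hχψ : PathRelated μ p' T γ t χ ψ) :
    PathRelated μ p' T γ (t + 1) φ ψ := fun i hi => by
  rw [chainApply_range_succ, hφχ _ _ (hi 0 t.succ_pos),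
    hχψ (fun n => i (n + 1)) fun s hs => hi (s + 1) (by omega)]

lemma PathRelated.exists_of_succ (hnext : ∀ a, ∃ b, 0 < p' a b) (hprev : ∀ b, ∃ a, 0 < p' a b)
    (hT : ∀ g, Function.Injective (T g)) {t : ℕ} {φ ψ : Ξ → Lp ℝ 2 μ}
    (h : PathRelated μ p' T γ (t + 1) φ ψ) :
    ∃ χ, (∀ a b, 0 < p' a b → φ a = T (γ a)⁻¹ (χ b)) ∧ PathRelated μ p' T γ t χ ψ := by
  choose next hnext using hnext
  choose prev hprev using hprev
  have hforward (x : Ξ) (n : ℕ) : 0 < p' (next^[n] x) (next^[n + 1] x) := by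
    rw [Function.iterate_succ_apply']
    exact hnext _
  have hcons (y : Ξ) (i : ℕ → Ξ) (hy : 0 < p' y (i 0))
      (hi : ∀ s, s < t → 0 < p' (i s) (i (s + 1))) :
      φ y = T (γ y)⁻¹ (chainApply μ T ((List.range t).map fun s => γ (i s)) (ψ (i t))) := by
    have := h (fun n => Nat.casesOn (motive := fun _ => Ξ) n y i) fun s hs => by
      cases s with
      | zero => exact hy
      | succ s => exact hi s (by omega)
    rwa [chainApply_range_succ] at this
  refine ⟨fun x => chainApply μ T ((List.range t).map fun s => γ (next^[s] x)) (ψ (next^[t] x)),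
    fun a b hab => hcons a _ hab fun s _ => hforward b s, fun i hi => ?_⟩
  have hy := hprev (i 0)
  exact hT _ ((hcons _ (fun n => next^[n] (i 0)) hy fun s _ => hforward (i 0) s).symm.trans
    (hcons _ i hy hi))

end Paths

section Markov

variable {Ξ : Type*} [Fintype Ξ] {X : Type*} [MeasurableSpace X] {G : Type*} [Group G]
  {μ : Measure X} {p : Ξ → ℝ} {p' : Ξ → Ξ → ℝ} {T : G → Lp ℝ 2 μ →L[ℝ] Lp ℝ 2 μ} {γ : Ξ → G}

lemma exists_pos_of_sum_eq_one (hrow : ∀ i, ∑ j, p' i j = 1) (a : Ξ) : ∃ b, 0 < p' a b := by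
  obtain ⟨b, -, hb⟩ := Finset.exists_lt_of_sum_lt (s := Finset.univ) (f := fun _ => (0 : ℝ))
    (g := p' a) (by simp [hrow a])
  exact ⟨b, hb⟩

lemma exists_pos_of_stationary (hp : ∀ j, 0 < p j)
    (hstat : ∀ j, ∑ i, p i * p' i j = p j) (b : Ξ) : ∃ a, 0 < p' a b := by
  obtain ⟨a, -, ha⟩ := Finset.exists_lt_of_sum_lt (s := Finset.univ) (f := fun _ => (0 : ℝ))
    (g := fun a => p a * p' a b) (by simp [hstat b, hp b])
  exact ⟨a, pos_of_mul_pos_right ha (hp a).le⟩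

lemma Pop_apply_eq_of_forall_pos (hp'nn : ∀ i j, 0 ≤ p' i j) (hrow : ∀ i, ∑ j, p' i j = 1)
    {χ : Ξ → Lp ℝ 2 μ} {a : Ξ} {v : Lp ℝ 2 μ} (h : ∀ b, 0 < p' a b → v = T (γ a)⁻¹ (χ b)) :
    Pop μ p' T γ χ a = v :=
  calc Pop μ p' T γ χ a = ∑ b, p' a b • v := Finset.sum_congr rfl fun b _ => by
          rcases (hp'nn a b).eq_or_lt with hab | hab
          · rw [← hab, zero_smul, zero_smul]
          · rw [h b hab]
    _ = v := by rw [← Finset.sum_smul, hrow, one_smul]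

lemma PathRelated.iterate_Pop_eq (hp'nn : ∀ i j, 0 ≤ p' i j) (hrow : ∀ i, ∑ j, p' i j = 1)
    (hprev : ∀ b, ∃ a, 0 < p' a b) (hT : ∀ g, Function.Injective (T g)) {t : ℕ}
    {φ ψ : Ξ → Lp ℝ 2 μ} (h : PathRelated μ p' T γ t φ ψ) : (Pop μ p' T γ)^[t] ψ = φ := by
  induction t generalizing φ with
  | zero => exact funext fun a => (h (fun _ => a) fun s hs => absurd hs s.not_lt_zero).symm
  | succ t ih =>
    obtain ⟨χ, hφχ, hχψ⟩ := h.exists_of_succ (exists_pos_of_sum_eq_one hrow) hprev hT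
    rw [Function.iterate_succ_apply', ih hχψ]
    exact funext fun a => Pop_apply_eq_of_forall_pos hp'nn hrow (hφχ a)

def dispersion (p : Ξ → ℝ) (p' : Ξ → Ξ → ℝ) (φ : Ξ → Lp ℝ 2 μ) : ℝ :=
  ∑ a, p a * ∑ j, ∑ l, p' a j * p' a l * ‖φ j - φ l‖ ^ 2

lemma wip_self (φ : Ξ → Lp ℝ 2 μ) : wip μ p φ φ = ∑ a, p a * ‖φ a‖ ^ 2 := by
  simp only [wip, real_inner_self_eq_norm_sq]

lemma two_mul_wip_Pop_add_dispersion (hT : ∀ g f, ‖T g f‖ = ‖f‖) (hrow : ∀ i, ∑ j, p' i j = 1)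
    (hstat : ∀ j, ∑ i, p i * p' i j = p j) (φ : Ξ → Lp ℝ 2 μ) :
    2 * wip μ p (Pop μ p' T γ φ) (Pop μ p' T γ φ) + dispersion p p' φ = 2 * wip μ p φ φ := by
  have hrow_sq (a : Ξ) : 2 * ‖Pop μ p' T γ φ a‖ ^ 2
      + ∑ j, ∑ l, p' a j * p' a l * ‖φ j - φ l‖ ^ 2 = 2 * ∑ j, p' a j * ‖φ j‖ ^ 2 := by
    have := norm_sum_smul_sq (p' a) fun j => T (γ a)⁻¹ (φ j)
    simp_rw [← map_sub, hT, hrow, mul_one] at this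
    exact this
  have hstat_sq : ∑ a, p a * ∑ j, p' a j * ‖φ j‖ ^ 2 = ∑ j, p j * ‖φ j‖ ^ 2 := by
    simp_rw [Finset.mul_sum, ← mul_assoc]
    rw [Finset.sum_comm]
    simp_rw [← Finset.sum_mul, hstat]
  rw [wip_self, wip_self, dispersion, ← hstat_sq, Finset.mul_sum, Finset.mul_sum,
    ← Finset.sum_add_distrib]
  refine Finset.sum_congr rfl fun a _ => ?_
  linear_combination p a * hrow_sq a

lemma dispersion_nonneg (hp : ∀ j, 0 ≤ p j) (hp'nn : ∀ i j, 0 ≤ p' i j) (φ : Ξ → Lp ℝ 2 μ) :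
    0 ≤ dispersion p p' φ := by
  refine Finset.sum_nonneg fun a _ => mul_nonneg (hp a) (Finset.sum_nonneg fun j _ =>
    Finset.sum_nonneg fun l _ => by have := hp'nn a j; have := hp'nn a l; positivity)

lemma eq_of_dispersion_eq_zero (hp : ∀ j, 0 < p j) (hp'nn : ∀ i j, 0 ≤ p' i j)
    {φ : Ξ → Lp ℝ 2 μ} (hφ : dispersion p p' φ = 0) {a j l : Ξ} (hj : 0 < p' a j)
    (hl : 0 < p' a l) : φ j = φ l := by
  rw [dispersion] at hφ
  have hterm_nn (b j l : Ξ) : 0 ≤ p' b j * p' b l * ‖φ j - φ l‖ ^ 2 := by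
    have := hp'nn b j; have := hp'nn b l; positivity
  have hsum_nn (b : Ξ) (_ : b ∈ Finset.univ) :
      0 ≤ p b * ∑ j, ∑ l, p' b j * p' b l * ‖φ j - φ l‖ ^ 2 :=
    mul_nonneg (hp b).le (Finset.sum_nonneg fun j _ => Finset.sum_nonneg fun l _ => hterm_nn b j l)
  have hsum_a : p a * ∑ j, ∑ l, p' a j * p' a l * ‖φ j - φ l‖ ^ 2 = 0 :=
    (Finset.sum_eq_zero_iff_of_nonneg hsum_nn).1 hφ a (Finset.mem_univ a)
  have hrow_a : ∑ l, p' a j * p' a l * ‖φ j - φ l‖ ^ 2 = 0 :=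
    (Finset.sum_eq_zero_iff_of_nonneg fun j _ => Finset.sum_nonneg fun l _ => hterm_nn a j l).1
      ((mul_eq_zero.1 hsum_a).resolve_left (hp a).ne') j (Finset.mem_univ j)
  have hjl : p' a j * p' a l * ‖φ j - φ l‖ ^ 2 = 0 :=
    (Finset.sum_eq_zero_iff_of_nonneg fun l _ => hterm_nn a j l).1 hrow_a l (Finset.mem_univ l)
  have hnorm := (mul_eq_zero.1 hjl).resolve_left (mul_pos hj hl).ne'
  exact sub_eq_zero.1 (norm_eq_zero.1 (pow_eq_zero_iff two_ne_zero |>.1 hnorm))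

lemma dispersion_iterate_eq_zero (hp : ∀ j, 0 ≤ p j) (hp'nn : ∀ i j, 0 ≤ p' i j)
    (hT : ∀ g f, ‖T g f‖ = ‖f‖) (hrow : ∀ i, ∑ j, p' i j = 1)
    (hstat : ∀ j, ∑ i, p i * p' i j = p j) {k : ℕ} {φ : Ξ → Lp ℝ 2 μ}
    (hk : (Pop μ p' T γ)^[k] φ = φ) {s : ℕ} (hs : s < k) :
    dispersion p p' ((Pop μ p' T γ)^[s] φ) = 0 := by
  set energy := fun n => wip μ p ((Pop μ p' T γ)^[n] φ) ((Pop μ p' T γ)^[n] φ)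
  have hstep (n : ℕ) : 2 * energy (n + 1) + dispersion p p' ((Pop μ p' T γ)^[n] φ)
      = 2 * energy n := by
    simp only [energy, Function.iterate_succ_apply']
    exact two_mul_wip_Pop_add_dispersion hT hrow hstat _
  have hanti : Antitone energy := antitone_nat_of_succ_le fun n => by
    linarith [hstep n, dispersion_nonneg hp hp'nn ((Pop μ p' T γ)^[n] φ)]
  have hperiod : energy k = energy 0 := by simp only [energy, hk, Function.iterate_zero_apply]
  have := hanti (Nat.zero_le s)
  have := hanti (Nat.succ_le_of_lt hs)
  linarith [hstep s, dispersion_nonneg hp hp'nn ((Pop μ p' T γ)^[s] φ)]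

lemma pathRelated_of_iterate_eq_self (hp : ∀ j, 0 < p j) (hp'nn : ∀ i j, 0 ≤ p' i j)
    (hT : ∀ g f, ‖T g f‖ = ‖f‖) (hrow : ∀ i, ∑ j, p' i j = 1)
    (hstat : ∀ j, ∑ i, p i * p' i j = p j) {k : ℕ} {φ : Ξ → Lp ℝ 2 μ}
    (hk : (Pop μ p' T γ)^[k] φ = φ) : PathRelated μ p' T γ k φ φ := by
  suffices ∀ t ≤ k, PathRelated μ p' T γ t ((Pop μ p' T γ)^[t] φ) φ by
    simpa only [hk] using this k le_rfl
  intro t ht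
  induction t with
  | zero => exact fun i _ => rfl
  | succ t ih =>
    refine PathRelated.succ (fun a b hab => ?_) (ih (by omega))
    have hrigid := dispersion_iterate_eq_zero (fun j => (hp j).le) hp'nn hT hrow hstat hk ht
    rw [Function.iterate_succ_apply']
    exact Pop_apply_eq_of_forall_pos hp'nn hrow fun b' hb' => by
      rw [eq_of_dispersion_eq_zero hp hp'nn hrigid hab hb']

end Markov

theorem statement10_general
    {Ξ : Type*} [Fintype Ξ] {X : Type*} [MeasurableSpace X] {G : Type*} [Group G]
    (μ : Measure X)
    -- the row-stochastic matrix with strictly positive stationary distribution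
    (p : Ξ → ℝ) (hp : ∀ j, 0 < p j)
    (p' : Ξ → Ξ → ℝ) (hp'nn : ∀ i j, 0 ≤ p' i j) (hrow : ∀ i, ∑ j, p' i j = 1)
    (hstat : ∀ j, ∑ i, p i * p' i j = p j)
    -- the measure-preserving action of G on (X,μ) by invertible transformations
    (S : G → X → X) (hS : ∀ g, MeasurePreserving (S g) μ μ)
    -- the Koopman operators T_g f = f ∘ S g⁻¹ on L²(X,μ)
    (T : G → Lp ℝ 2 μ →L[ℝ] Lp ℝ 2 μ)
    (hT : ∀ g (f : Lp ℝ 2 μ), (T g f : X → ℝ) =ᵐ[μ] fun x => f (S g⁻¹ x))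
    (γ : Ξ → G)
    (k : ℕ) (φ : Ξ → Lp ℝ 2 μ) :
    (Pop μ p' T γ)^[k] φ = φ ↔
      ∀ i : ℕ → Ξ, (∀ s, s < k → 0 < p' (i s) (i (s + 1))) →
        φ (i 0) = chainApply μ T ((List.range k).map fun s => γ (i s)) (φ (i k)) := by
  have hnorm (g : G) (f : Lp ℝ 2 μ) : ‖T g f‖ = ‖f‖ := Lp.norm_eq_of_ae_eq_comp (hS g⁻¹) (hT g f)
  have hinj (g : G) : Function.Injective (T g) :=
    (AddMonoidHomClass.isometry_of_norm (T g) (hnorm g)).injective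
  exact ⟨pathRelated_of_iterate_eq_self hp hp'nn hnorm hrow hstat,
    PathRelated.iterate_Pop_eq hp'nn hrow (exists_pos_of_stationary hp hstat) hinj⟩

/-- Characterization of the `L²`-solutions of `P^k φ = φ` for the Markov
operator `P` associated with an aperiodic irreducible stochastic matrix and a family of
Koopman operators. -/
theorem statement10
    {Ξ : Type*} [Fintype Ξ] [DecidableEq Ξ] {X : Type*} [MeasurableSpace X] {G : Type*} [Group G]
    (μ : Measure X) [IsProbabilityMeasure μ]
    -- the row-stochastic matrix with strictly positive stationary distribution
    (p : Ξ → ℝ) (hp : ∀ j, 0 < p j)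
    (p' : Ξ → Ξ → ℝ) (hp'nn : ∀ i j, 0 ≤ p' i j) (hrow : ∀ i, ∑ j, p' i j = 1)
    (hstat : ∀ j, ∑ i, p i * p' i j = p j)
    -- some matrix power has strictly positive entries
    (N : ℕ) (hN : 1 ≤ N) (hNpos : ∀ i j, 0 < (Matrix.of p' ^ N) i j)
    -- the measure-preserving action of G on (X,μ) by invertible transformations
    (S : G → X → X) (hS : ∀ g, MeasurePreserving (S g) μ μ)
    (hS1 : S 1 = id) (hSm : ∀ g g', S (g * g') = S g ∘ S g')
    -- the Koopman operators T_g f = f ∘ S g⁻¹ on L²(X,μ)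
    (T : G → Lp ℝ 2 μ →L[ℝ] Lp ℝ 2 μ)
    (hT : ∀ g (f : Lp ℝ 2 μ), (T g f : X → ℝ) =ᵐ[μ] fun x => f (S g⁻¹ x))
    (γ : Ξ → G)
    (k : ℕ) (hk : 1 ≤ k) (φ : Ξ → Lp ℝ 2 μ) :
    (Pop μ p' T γ)^[k] φ = φ ↔
      ∀ i : ℕ → Ξ, (∀ s, s < k → 0 < p' (i s) (i (s + 1))) →
        φ (i 0) = chainApply μ T ((List.range k).map fun s => γ (i s)) (φ (i k)) :=
  statement10_general μ p hp p' hp'nn hrow hstat S hS T hT γ k φ
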